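/- Let D be integrally closed, p ∈ D[X] non-constant of degree n with multi-set of roots Ω_p in an algebraic closure of K, and let f ∈ K[X] be such that f(α) is integral over D for every α ∈ Ω_p. Then P(X) = ∏_{α ∈ Ω_p} (X - f(α)) has coefficients in D, and p(X) divides P(f(X)) in K[X]. -/

import Mathlib

/-! The coefficients of `∏ (X - f(αᵢ))` are, up to sign, elementary symmetric functions of
the `f(αᵢ)`, hence values at the `αᵢ` of symmetric polynomials over `K`. By the fundamental
theorem on symmetric polynomials these are polynomials over `K` in the elementary symmetric
functions of the `αᵢ`, i.e. in the coefficients of `p / lc(p)`, so they lie in `K`. They are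
also integral over `D`, being polynomials in the integral elements `f(αᵢ)`, hence lie in `D` as
`D` is integrally closed. Finally `X - αᵢ` divides `f(X) - f(αᵢ)`, so `∏ (X - αᵢ)` divides
`P(f(X))`. -/

open Polynomial

namespace MvPolynomial

variable {R S σ : Type*} [CommRing R] [CommRing S] [Algebra R S]

theorem IsSymmetric.aeval_polynomial_aeval_X {E : MvPolynomial σ R} (hE : E.IsSymmetric)
    (g : R[X]) : (aeval (fun i => Polynomial.aeval (X i : MvPolynomial σ R) g) E).IsSymmetric := by
  intro e
  conv_rhs => rw [← hE e, aeval_rename]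
  simp only [comp_aeval_apply, ← Polynomial.aeval_algHom_apply, rename_X]
  rfl

theorem aeval_aeval_polynomial_aeval_X (t : σ → S) (g : R[X]) (E : MvPolynomial σ R) :
    aeval t (aeval (fun i => Polynomial.aeval (X i : MvPolynomial σ R) g) E) =
      aeval (fun i => Polynomial.aeval (t i) g) E := by
  simp only [comp_aeval_apply, ← Polynomial.aeval_algHom_apply, aeval_X]

variable [Fintype σ]

theorem aeval_mem_bot_of_isSymmetric {t : σ → S}
    (ht : ∀ k ≤ Fintype.card σ, aeval t (esymm σ R k) ∈ (⊥ : Subalgebra R S))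
    {P : MvPolynomial σ R} (hP : P.IsSymmetric) : aeval t P ∈ (⊥ : Subalgebra R S) := by
  obtain ⟨q, hq⟩ := esymmAlgHom_surjective (σ := σ) R le_rfl ⟨P, hP⟩
  have hPq : P = aeval (fun i : Fin (Fintype.card σ) => esymm σ R (i + 1)) q := by
    rw [← esymmAlgHom_apply, hq]
  have hle : (aeval (R := R) fun i : Fin (Fintype.card σ) => aeval t (esymm σ R (i + 1))).range
      ≤ ⊥ := by
    rw [aeval_range]
    exact Algebra.adjoin_le (Set.range_subset_iff.2 fun i => ht _ i.2)
  rw [hPq, comp_aeval_apply]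
  exact hle ⟨q, rfl⟩

end MvPolynomial

namespace Polynomial

open MvPolynomial (esymm)

section Vieta

variable {R S σ : Type*} [CommRing R] [CommRing S] [Algebra R S] [Fintype σ]

theorem coeff_prod_X_sub_C_eq_aeval_esymm (t : σ → S) {k : ℕ} (hk : k ≤ Fintype.card σ) :
    (∏ i, (X - C (t i))).coeff k =
      (-1) ^ (Fintype.card σ - k) * MvPolynomial.aeval t (esymm σ R (Fintype.card σ - k)) := by
  have hcard : Multiset.card (Finset.univ.val.map t) = Fintype.card σ := by simp
  rw [MvPolynomial.aeval_esymm_eq_multiset_esymm, Finset.prod_eq_multiset_prod, ← hcard,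
    ← Multiset.prod_X_sub_C_coeff _ (hcard ▸ hk), Multiset.map_map]
  rfl

theorem prod_X_sub_C_mem_lifts_iff (t : σ → S) :
    ∏ i, (X - C (t i)) ∈ lifts (algebraMap R S) ↔
      ∀ k ≤ Fintype.card σ, MvPolynomial.aeval t (esymm σ R k) ∈ (⊥ : Subalgebra R S) := by
  rw [lifts_iff_coeff_lifts]
  constructor
  · intro h k hk
    have hcoeff :=
      coeff_prod_X_sub_C_eq_aeval_esymm (R := R) t (Nat.sub_le (Fintype.card σ) k)
    rw [Nat.sub_sub_self hk] at hcoeff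
    have he : MvPolynomial.aeval t (esymm σ R k) =
        (-1) ^ k * (∏ i, (X - C (t i))).coeff (Fintype.card σ - k) := by
      rw [hcoeff, ← mul_assoc, ← mul_pow, neg_one_mul, neg_neg, one_pow, one_mul]
    rw [he]
    exact mul_mem (pow_mem (neg_mem (one_mem _)) k) (h _)
  · intro h k
    by_cases hk : k ≤ Fintype.card σ
    · rw [coeff_prod_X_sub_C_eq_aeval_esymm (R := R) t hk]
      exact mul_mem (pow_mem (neg_mem (one_mem _)) _) (h _ (Nat.sub_le _ k))
    · have hdeg : (∏ i, (X - C (t i))).natDegree ≤ Fintype.card σ :=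
        (natDegree_prod_le _ _).trans <| (Finset.sum_le_card_nsmul _ _ 1 fun i _ =>
          natDegree_X_sub_C_le (t i)).trans_eq (by simp)
      rw [coeff_eq_zero_of_natDegree_lt (by omega)]
      exact ⟨0, map_zero _⟩

theorem prod_X_sub_C_aeval_mem_lifts {t : σ → S}
    (ht : ∏ i, (X - C (t i)) ∈ lifts (algebraMap R S)) (g : R[X]) :
    ∏ i, (X - C (Polynomial.aeval (t i) g)) ∈ lifts (algebraMap R S) := by
  rw [prod_X_sub_C_mem_lifts_iff] at ht ⊢
  intro k _
  rw [← MvPolynomial.aeval_aeval_polynomial_aeval_X]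
  exact MvPolynomial.aeval_mem_bot_of_isSymmetric ht
    ((MvPolynomial.esymm_isSymmetric σ R k).aeval_polynomial_aeval_X g)

end Vieta

theorem isIntegral_coeff_prod_X_sub_C {D L ι : Type*} [CommRing D] [CommRing L] [Algebra D L]
    {s : Finset ι} {t : ι → L} (ht : ∀ i ∈ s, IsIntegral D (t i)) (k : ℕ) :
    IsIntegral D ((∏ i ∈ s, (X - C (t i))).coeff k) := by
  have hlifts : ∏ i ∈ s, (X - C (t i)) ∈ lifts (algebraMap (integralClosure D L) L) :=
    Subsemiring.prod_mem _ fun i hi => (mem_lifts _).2 ⟨X - C ⟨t i, ht i hi⟩, by simp⟩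
  obtain ⟨Q, hQ⟩ := (mem_lifts _).1 hlifts
  rw [← hQ, coeff_map]
  exact (Q.coeff k).2

theorem mem_lifts_of_isIntegral_coeff {D K L : Type*} [CommRing D] [IsIntegrallyClosed D]
    [Field K] [Algebra D K] [IsFractionRing D K] [CommRing L] [Nontrivial L] [Algebra D L]
    [Algebra K L] [IsScalarTower D K L] {q : L[X]} (hK : q ∈ lifts (algebraMap K L))
    (hD : ∀ k, IsIntegral D (q.coeff k)) : q ∈ lifts (algebraMap D L) := by
  rw [lifts_iff_coeff_lifts] at hK ⊢
  intro k
  obtain ⟨x, hx⟩ := hK k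
  have hx_int : IsIntegral D x :=
    (isIntegral_algHom_iff (IsScalarTower.toAlgHom D K L) (algebraMap K L).injective).1
      (hx ▸ hD k)
  obtain ⟨y, rfl⟩ := IsIntegrallyClosed.isIntegral_iff.1 hx_int
  exact ⟨y, by rw [IsScalarTower.algebraMap_apply D K L, hx]⟩

theorem prod_X_sub_C_dvd_prod_X_sub_C_eval_comp {R ι : Type*} [CommRing R] (s : Finset ι)
    (α : ι → R) (g : R[X]) :
    ∏ i ∈ s, (X - C (α i)) ∣ (∏ i ∈ s, (X - C (g.eval (α i)))).comp g := by
  rw [prod_comp]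
  exact Finset.prod_dvd_prod_of_dvd _ _ fun i _ => by
    simpa using X_sub_C_dvd_sub_C_eval (p := g) (a := α i)

end Polynomial

theorem prod_sub_values_integral (D : Type*) [CommRing D] [IsDomain D] [IsIntegrallyClosed D]
    (L : Type*) [Field L] [Algebra D L] [Algebra (FractionRing D) L]
    [IsScalarTower D (FractionRing D) L]
    (p : D[X]) (n : ℕ) (hdeg : p.natDegree = n) (hn : 0 < n) (α : ℕ → L)
    (hsplit : p.map (algebraMap D L) =
      C (algebraMap D L p.leadingCoeff) * ∏ i ∈ Finset.range n, (X - C (α i)))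
    (f : Polynomial (FractionRing D))
    (hf : ∀ i < n, IsIntegral D ((f.map (algebraMap (FractionRing D) L)).eval (α i))) :
    ∃ P₀ : D[X],
      P₀.map (algebraMap D L) =
        ∏ i ∈ Finset.range n, (X - C ((f.map (algebraMap (FractionRing D) L)).eval (α i))) ∧
      p.map (algebraMap D (FractionRing D)) ∣
        (P₀.map (algebraMap D (FractionRing D))).comp f := by
  set K := FractionRing D
  have hlc : algebraMap D L p.leadingCoeff ≠ 0 := by
    rw [IsScalarTower.algebraMap_apply D K L, _root_.map_ne_zero,
      map_ne_zero_iff _ (IsFractionRing.injective D K), leadingCoeff_ne_zero]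
    exact ne_zero_of_natDegree_gt (hdeg ▸ hn)
  have hroots : ∏ i ∈ Finset.range n, (X - C (α i)) ∈ lifts (algebraMap K L) := by
    have hp : p.map (algebraMap D L) ∈ lifts (algebraMap K L) :=
      (mem_lifts _).2 ⟨p.map (algebraMap D K), by rw [map_map, ← IsScalarTower.algebraMap_eq]⟩
    have := base_mul_mem_lifts (algebraMap D K p.leadingCoeff)⁻¹ hp
    rwa [hsplit, ← mul_assoc, ← C_mul, map_inv₀, ← IsScalarTower.algebraMap_apply,
      inv_mul_cancel₀ hlc, C_1, one_mul] at this
  have hvalues : ∏ i ∈ Finset.range n, (X - C ((f.map (algebraMap K L)).eval (α i)))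
      ∈ lifts (algebraMap K L) := by
    rw [Finset.prod_range] at hroots ⊢
    simpa only [eval_map_algebraMap] using prod_X_sub_C_aeval_mem_lifts hroots f
  obtain ⟨P₀, hP₀⟩ := (mem_lifts _).1 <| mem_lifts_of_isIntegral_coeff hvalues
    (isIntegral_coeff_prod_X_sub_C fun i hi => hf i (Finset.mem_range.1 hi))
  refine ⟨P₀, hP₀, ?_⟩
  rw [← map_dvd_map' (algebraMap K L), map_comp, map_map, map_map,
    ← IsScalarTower.algebraMap_eq, hP₀, hsplit]
  exact (isUnit_C.2 hlc.isUnit).mul_left_dvd.2 (prod_X_sub_C_dvd_prod_X_sub_C_eval_comp _ _ _)
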